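/- There exists a constant C > 0 such that for every n ≥ 1, every word A^(n) = (A₁,…,A_n) ∈ 𝒜ⁿ, and every x ∈ [0,1], the composed inverse branch h_{A^(n)} = h_{A₁}∘⋯∘h_{A_n} satisfies |h_{A^(n)}''(x)| ≤ C·|h_{A^(n)}'(x)| (bounded distortion). -/

import Mathlib

open MeasureTheory Real Set Filter Topology

namespace SCF

/-- The involution `ι(x) = (1−x)/(1+x)`. -/
noncomputable def iota (x : ℝ) : ℝ := (1 - x) / (1 + x)

/-- Even continued-fraction step.  For `y ∈ (0,1/2]` one has
`⌊(1/y+1)/2⌋ = k` whenever `1/y ∈ (2k−1, 2k+1)`, so `Te y = |1/y − 2k|`;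
explicitly `Te y = 1/y − 2` on `[1/3,1/2]`, `Te y = 1/y − 2k` on
`[1/(2k+1), 1/(2k))` and `Te y = 2k − 1/y` on `[1/(2k), 1/(2k−1))` (`k ≥ 2`). -/
noncomputable def Te (y : ℝ) : ℝ := |1 / y - 2 * (⌊(1 / y + 1) / 2⌋ : ℝ)|

/-- The spliced continued fraction (SCF) map `T : [0,1] → [0,1]`, with
`T 0 = 0`, `T 1 = 1`.  On `(0,1/2]` it is the even continued fraction map
(see `Te`), and on `(1/2,1)` it is the odd–odd map, which is the conjugate
`ι ∘ Te ∘ ι` of the even map; this agrees with the branchwise definition: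
`T x = (k x − (k−1))/(k − (k+1) x)` on `((k−1)/k, (2k−1)/(2k+1)]` and
`T x = (k − (k+1) x)/(k x − (k−1))` on `((2k−1)/(2k+1), k/(k+1)]` for `k ≥ 2`. -/
noncomputable def T (x : ℝ) : ℝ :=
  if x ≤ 0 then 0
  else if 1 ≤ x then 1
  else if x ≤ 1 / 2 then Te x
  else iota (Te (iota x))

/-- Parity label of a digit: `e` (even cusp) or `o` (odd–odd cusp). -/
inductive Par | e | o
deriving DecidableEq

/-- A candidate SCF digit `(a, ε)_s`. -/
structure Digit where
  a : ℤ
  eps : ℤ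
  s : Par
deriving DecidableEq

/-- The digit set `𝒜 = {(k,ε)_s : k ≥ 2, ε = ±1, s ∈ {e,o}} ∪ {(1,+1)_e}`. -/
def Digit.Valid (d : Digit) : Prop :=
  (2 ≤ d.a ∧ (d.eps = 1 ∨ d.eps = -1)) ∨ (d.a = 1 ∧ d.eps = 1 ∧ d.s = Par.e)

/-- The branch intervals `I_{(a,ε)_s}` of the SCF map. -/
noncomputable def branch (d : Digit) : Set ℝ :=
  match d.s with
  | Par.e =>
      if d.a = 1 then Set.Icc (1/3 : ℝ) (1/2)
      else if d.eps = 1 then Set.Ico (1 / (2 * (d.a : ℝ) + 1)) (1 / (2 * (d.a : ℝ)))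
      else Set.Ico (1 / (2 * (d.a : ℝ))) (1 / (2 * (d.a : ℝ) - 1))
  | Par.o =>
      if d.eps = 1 then
        Set.Ioc ((2 * (d.a : ℝ) - 1) / (2 * (d.a : ℝ) + 1)) ((d.a : ℝ) / ((d.a : ℝ) + 1))
      else
        Set.Ioc (((d.a : ℝ) - 1) / (d.a : ℝ)) ((2 * (d.a : ℝ) - 1) / (2 * (d.a : ℝ) + 1))

open Classical in
/-- The SCF digit of a point `y` (the unique valid digit `d` with `y ∈ I_d`;
well defined for every `y ∈ (0,1)`). -/
noncomputable def digit (y : ℝ) : Digit :=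
  if h : ∃ d : Digit, d.Valid ∧ y ∈ branch d then h.choose else ⟨1, 1, Par.e⟩

/-- The `n`-th SCF digit `(a_n(x), ε_n(x))_{s_n(x)}` of `x`, `n ≥ 1`,
determined by `T^[n−1] x ∈ I_{(a_n,ε_n)_{s_n}}`. -/
noncomputable def dig (n : ℕ) (x : ℝ) : Digit := digit (T^[n - 1] x)

/-- The `n`-th SCF partial quotient `a_n(x)`. -/
noncomputable def a (n : ℕ) (x : ℝ) : ℤ := (dig n x).a

/-- The invariant density `f_μ`. -/
noncomputable def fdens (x : ℝ) : ℝ :=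
  2 / (Real.log (2 + Real.sqrt 3) * (1 - (2 - Real.sqrt 3) * x) * (1 + Real.sqrt 3 * x))

/-- The absolutely continuous `T`-invariant probability measure `μ` on `(0,1)`. -/
noncomputable def mu : Measure ℝ :=
  (volume.restrict (Set.Ioo (0 : ℝ) 1)).withDensity fun x => ENNReal.ofReal (fdens x)

/-- The inverse branches `h_{(a,ε)_s}` of the SCF map `T`. -/
noncomputable def h (d : Digit) (x : ℝ) : ℝ :=
  match d.s with
  | Par.e => 1 / (2 * (d.a : ℝ) + (d.eps : ℝ) * x)
  | Par.o =>
      if d.eps = 1 then (((d.a : ℝ) - 1) * x + (d.a : ℝ)) / ((d.a : ℝ) * x + ((d.a : ℝ) + 1))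
      else ((d.a : ℝ) * x + ((d.a : ℝ) - 1)) / (((d.a : ℝ) + 1) * x + (d.a : ℝ))

/-- Composed inverse branch `h_{A^{(n)}} = h_{A₁} ∘ ⋯ ∘ h_{A_n}` of a word. -/
noncomputable def hWord (l : List Digit) : ℝ → ℝ :=
  l.foldr (fun d g => h d ∘ g) id

/-- The dual inverse branches `bar h_{(b,η)_t}`. -/
noncomputable def hbar (d : Digit) (y : ℝ) : ℝ :=
  match d.s with
  | Par.e => (d.eps : ℝ) / (2 * (d.a : ℝ) + y)
  | Par.o =>
      1 / (1 + (d.eps : ℝ) / (((d.a : ℝ) - ((max 0 d.eps : ℤ) : ℝ)) + 1 / (1 + y)))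

/-- The matrix `M_{(a,ε)_s}` associated with the inverse branch `h_{(a,ε)_s}`. -/
noncomputable def Mdig (d : Digit) : Matrix (Fin 2) (Fin 2) ℝ :=
  match d.s with
  | Par.e => !![0, 1; (d.eps : ℝ), 2 * (d.a : ℝ)]
  | Par.o =>
      !![(d.a : ℝ) - ((max 0 d.eps : ℤ) : ℝ), (d.a : ℝ) - ((max 0 d.eps : ℤ) : ℝ) + (d.eps : ℝ);
         (d.a : ℝ) - ((max 0 d.eps : ℤ) : ℝ) + 1, (d.a : ℝ) - ((max 0 d.eps : ℤ) : ℝ) + (d.eps : ℝ) + 1]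

/-- `M_n(x) = M_{(a₁,ε₁)_{s₁}} ⋯ M_{(a_n,ε_n)_{s_n}}`. -/
noncomputable def Mn (n : ℕ) (x : ℝ) : Matrix (Fin 2) (Fin 2) ℝ :=
  ((List.range n).map fun i => Mdig (digit (T^[i] x))).prod

/-- `P_n(x)`: the `(1,2)`-entry of `M_n(x)` (numerator of the `n`-th convergent). -/
noncomputable def Pc (n : ℕ) (x : ℝ) : ℝ := Mn n x 0 1

/-- `Q_n(x)`: the `(2,2)`-entry of `M_n(x)` (denominator of the `n`-th convergent). -/
noncomputable def Qc (n : ℕ) (x : ℝ) : ℝ := Mn n x 1 1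

/-! Every inverse branch is a Möbius map `y ↦ (p y + q)/(r y + s)` with `|p s − q r| = 1` whose
denominator `D = r y + s` satisfies `D ≥ 2` and `2|r| ≤ 3D` on `[0,1]`. Hence `|h'| = D⁻² ≤ 1/4`
and `h''/h' = −2r/D` has modulus at most `3`. By the chain rule
`(φ ∘ ψ)'' = φ''(ψ) ψ'² + φ'(ψ) ψ''`, the invariant `|ψ''| ≤ 4 (1 − |ψ'|) |ψ'|` survives
precomposition of `ψ` with any further branch: the gain `3|ψ'|` of the first term is paid for by
the contraction `|(φ ∘ ψ)'| ≤ |ψ'|/4`. -/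

noncomputable def mobius (p q r s x : ℝ) : ℝ := (p * x + q) / (r * x + s)

section Mobius

variable {p q r s x : ℝ}

theorem hasDerivAt_mobius (hx : r * x + s ≠ 0) :
    HasDerivAt (mobius p q r s) ((p * s - q * r) / (r * x + s) ^ 2) x := by
  have hnum : HasDerivAt (fun y => p * y + q) p x := by
    simpa using ((hasDerivAt_id x).const_mul p).add_const q
  have hden : HasDerivAt (fun y => r * y + s) r x := by
    simpa using ((hasDerivAt_id x).const_mul r).add_const s
  exact (hnum.div hden hx).congr_deriv (by ring)

theorem deriv_deriv_mobius (hx : r * x + s ≠ 0) :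
    deriv (deriv (mobius p q r s)) x = -2 * r / (r * x + s) * deriv (mobius p q r s) x := by
  have hden : HasDerivAt (fun y => r * y + s) r x := by
    simpa using ((hasDerivAt_id x).const_mul r).add_const s
  have hnear : ∀ᶠ y in 𝓝 x, r * y + s ≠ 0 := hden.continuousAt.eventually_ne hx
  have hderiv : deriv (mobius p q r s) =ᶠ[𝓝 x] fun y => (p * s - q * r) / (r * y + s) ^ 2 :=
    hnear.mono fun y hy => (hasDerivAt_mobius hy).deriv
  rw [hderiv.deriv_eq, (hasDerivAt_mobius hx).deriv]
  have hquot : HasDerivAt (fun y => (p * s - q * r) / (r * y + s) ^ 2)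
      (-2 * r * (p * s - q * r) / (r * x + s) ^ 3) x :=
    ((hasDerivAt_const x _).div (hden.pow 2) (pow_ne_zero 2 hx)).congr_deriv <| by
      simp only [Pi.pow_apply]
      field_simp
      ring
  rw [hquot.deriv]
  field_simp

theorem abs_deriv_mobius (hdet : |p * s - q * r| = 1) (hx : r * x + s ≠ 0) :
    |deriv (mobius p q r s) x| = 1 / (r * x + s) ^ 2 := by
  rw [(hasDerivAt_mobius hx).deriv, abs_div, hdet, abs_of_nonneg (sq_nonneg _)]

theorem contDiffOn_mobius {S : Set ℝ} {n : WithTop ℕ∞} (hS : ∀ y ∈ S, r * y + s ≠ 0) :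
    ContDiffOn ℝ n (mobius p q r s) S :=
  ContDiffOn.div (by fun_prop) (by fun_prop) hS

end Mobius

theorem abs_mul_sq_add_mul_le {φ₁ φ₂ ψ₁ ψ₂ c A K : ℝ} (hK : 0 ≤ K) (hAK : A ≤ K * (1 - c))
    (hφ₁ : |φ₁| ≤ c) (hφ₂ : |φ₂| ≤ A * |φ₁|) (hψ₂ : |ψ₂| ≤ K * (1 - |ψ₁|) * |ψ₁|) :
    |φ₂ * ψ₁ ^ 2 + φ₁ * ψ₂| ≤ K * (1 - |φ₁ * ψ₁|) * |φ₁ * ψ₁| := by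
  have hφψ : |φ₁| * |ψ₁| ≤ c * |ψ₁| := by gcongr
  calc |φ₂ * ψ₁ ^ 2 + φ₁ * ψ₂| ≤ |φ₂| * |ψ₁| ^ 2 + |φ₁| * |ψ₂| := by
        rw [← abs_pow, ← abs_mul, ← abs_mul]
        exact abs_add_le _ _
    _ ≤ A * |φ₁| * |ψ₁| ^ 2 + |φ₁| * (K * (1 - |ψ₁|) * |ψ₁|) := by gcongr
    _ = |φ₁| * |ψ₁| * (A * |ψ₁| + K * (1 - |ψ₁|)) := by ring
    _ ≤ |φ₁| * |ψ₁| * (K * (1 - c) * |ψ₁| + K * (1 - |ψ₁|)) := by gcongr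
    _ = |φ₁| * |ψ₁| * (K * (1 - c * |ψ₁|)) := by ring
    _ ≤ |φ₁| * |ψ₁| * (K * (1 - |φ₁| * |ψ₁|)) := by gcongr
    _ = K * (1 - |φ₁ * ψ₁|) * |φ₁ * ψ₁| := by rw [abs_mul]; ring

section Comp

variable {f g : ℝ → ℝ} {s t : Set ℝ} {x : ℝ}

theorem deriv_comp_of_differentiableOn (hs : IsOpen s) (ht : IsOpen t)
    (hf : DifferentiableOn ℝ f t) (hg : DifferentiableOn ℝ g s) (hst : MapsTo g s t)
    (hx : x ∈ s) : deriv (f ∘ g) x = deriv f (g x) * deriv g x :=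
  deriv_comp x (hf.differentiableAt (ht.mem_nhds (hst hx))) (hg.differentiableAt (hs.mem_nhds hx))

theorem deriv_deriv_comp_of_contDiffOn (hs : IsOpen s) (ht : IsOpen t)
    (hf : ContDiffOn ℝ 2 f t) (hg : ContDiffOn ℝ 2 g s) (hst : MapsTo g s t) (hx : x ∈ s) :
    deriv (deriv (f ∘ g)) x =
      deriv (deriv f) (g x) * deriv g x ^ 2 + deriv f (g x) * deriv (deriv g) x := by
  have hf' : DifferentiableOn ℝ (deriv f) t :=
    (hf.deriv_of_isOpen ht (by norm_num : (1 : WithTop ℕ∞) + 1 ≤ 2)).differentiableOn one_ne_zero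
  have hg' : DifferentiableOn ℝ (deriv g) s :=
    (hg.deriv_of_isOpen hs (by norm_num : (1 : WithTop ℕ∞) + 1 ≤ 2)).differentiableOn one_ne_zero
  have hchain : deriv (f ∘ g) =ᶠ[𝓝 x] fun y => deriv f (g y) * deriv g y :=
    Filter.eventually_of_mem (hs.mem_nhds hx) fun y hy =>
      deriv_comp_of_differentiableOn hs ht (hf.differentiableOn two_ne_zero)
        (hg.differentiableOn two_ne_zero) hst hy
  have hgx : DifferentiableAt ℝ g x :=
    (hg.differentiableOn two_ne_zero).differentiableAt (hs.mem_nhds hx)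
  have hprod := ((hf'.differentiableAt (ht.mem_nhds (hst hx))).hasDerivAt.comp x
    hgx.hasDerivAt).mul (hg'.differentiableAt (hs.mem_nhds hx)).hasDerivAt
  rw [hchain.deriv_eq]
  exact hprod.deriv.trans (by simp only [Function.comp_apply]; ring)

end Comp

/-- An open neighbourhood of `[0,1]` that every inverse branch maps into `[0,1]`. -/
def branchDomain : Set ℝ := Ioo (-(1 / 2)) (3 / 2)

theorem isOpen_branchDomain : IsOpen branchDomain := isOpen_Ioo

theorem Icc_subset_branchDomain : Icc (0 : ℝ) 1 ⊆ branchDomain :=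
  fun _ hy => ⟨by linarith [hy.1], by linarith [hy.2]⟩

theorem Digit.Valid.exists_mobius {d : Digit} (hd : d.Valid) :
    ∃ p q r s : ℝ, h d = mobius p q r s ∧ |p * s - q * r| = 1 ∧
      (∀ y ∈ branchDomain, 0 ≤ p * y + q ∧ p * y + q ≤ r * y + s ∧ 0 < r * y + s) ∧
      ∀ y ∈ Icc (0 : ℝ) 1, 2 ≤ r * y + s ∧ |2 * r| ≤ 3 * (r * y + s) := by
  obtain ⟨a, ε, par⟩ := d
  rcases hd with ⟨ha, rfl | rfl⟩ | ⟨rfl, rfl, rfl⟩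
  on_goal 3 => refine ⟨0, 1, 1, 2, ?_⟩
  all_goals try (replace ha : (2 : ℝ) ≤ a := by exact_mod_cast ha); try cases par
  -- the goals are now the digits `(a,1)_e`, `(a,1)_o`, `(a,-1)_e`, `(a,-1)_o`, `(1,1)_e`
  on_goal 1 => refine ⟨0, 1, 1, 2 * a, ?_⟩
  on_goal 2 => refine ⟨a - 1, a, a, a + 1, ?_⟩
  on_goal 3 => refine ⟨0, 1, -1, 2 * a, ?_⟩
  on_goal 4 => refine ⟨a, a - 1, a + 1, a, ?_⟩
  all_goals
    refine ⟨funext fun y => ?_, by ring_nf <;> simp, fun y ⟨hy₀, hy₁⟩ => ?_, fun y ⟨hy₀, hy₁⟩ => ?_⟩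
    · norm_num [h, mobius, add_comm]
    · refine ⟨by nlinarith, by nlinarith, by nlinarith⟩
    · exact ⟨by nlinarith, abs_le.mpr ⟨by nlinarith, by nlinarith⟩⟩

section Branch

variable {d : Digit}

theorem Digit.Valid.mapsTo_h (hd : d.Valid) : MapsTo (h d) branchDomain (Icc 0 1) := by
  obtain ⟨p, q, r, s, hmob, -, hdom, -⟩ := hd.exists_mobius
  intro y hy
  obtain ⟨hnum, hle, hden⟩ := hdom y hy
  rw [hmob]
  exact ⟨div_nonneg hnum hden.le, div_le_one_of_le₀ hle hden.le⟩

theorem Digit.Valid.contDiffOn_h (hd : d.Valid) : ContDiffOn ℝ 2 (h d) branchDomain := by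
  obtain ⟨p, q, r, s, hmob, -, hdom, -⟩ := hd.exists_mobius
  rw [hmob]
  exact contDiffOn_mobius fun y hy => (hdom y hy).2.2.ne'

variable {y : ℝ}

theorem Digit.Valid.abs_deriv_h_le (hd : d.Valid) (hy : y ∈ Icc (0 : ℝ) 1) :
    |deriv (h d) y| ≤ 1 / 4 := by
  obtain ⟨p, q, r, s, hmob, hdet, -, hIcc⟩ := hd.exists_mobius
  obtain ⟨hD, -⟩ := hIcc y hy
  rw [hmob, abs_deriv_mobius hdet (by linarith)]
  gcongr
  nlinarith

theorem Digit.Valid.abs_deriv_deriv_h_le (hd : d.Valid) (hy : y ∈ Icc (0 : ℝ) 1) :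
    |deriv (deriv (h d)) y| ≤ 3 * |deriv (h d) y| := by
  obtain ⟨p, q, r, s, hmob, -, -, hIcc⟩ := hd.exists_mobius
  obtain ⟨hD, hr⟩ := hIcc y hy
  have hratio : |-2 * r / (r * y + s)| ≤ 3 := by
    rw [abs_div, abs_of_pos (by linarith : 0 < r * y + s), div_le_iff₀ (by linarith), neg_mul,
      abs_neg]
    exact hr
  rw [hmob, deriv_deriv_mobius (by linarith), abs_mul]
  gcongr

end Branch

section Word

variable {l : List Digit}

theorem mapsTo_hWord (hl : ∀ d ∈ l, d.Valid) {S : Set ℝ} (hIS : Icc 0 1 ⊆ S)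
    (hSD : S ⊆ branchDomain) : MapsTo (hWord l) S S := by
  induction l with
  | nil => exact mapsTo_id S
  | cons d t ih =>
    obtain ⟨hd, ht⟩ := List.forall_mem_cons.mp hl
    exact fun x hx => hIS (hd.mapsTo_h (hSD (ih ht hx)))

theorem contDiffOn_hWord (hl : ∀ d ∈ l, d.Valid) : ContDiffOn ℝ 2 (hWord l) branchDomain := by
  induction l with
  | nil => exact contDiffOn_id
  | cons d t ih =>
    obtain ⟨hd, ht⟩ := List.forall_mem_cons.mp hl
    exact hd.contDiffOn_h.comp (ih ht) (mapsTo_hWord ht Icc_subset_branchDomain le_rfl)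

theorem abs_deriv_deriv_hWord_le (hl : ∀ d ∈ l, d.Valid) {x : ℝ} (hx : x ∈ Icc (0 : ℝ) 1) :
    |deriv (deriv (hWord l)) x| ≤ 4 * (1 - |deriv (hWord l) x|) * |deriv (hWord l) x| := by
  induction l generalizing x with
  | nil => simp [hWord]
  | cons d t ih =>
    obtain ⟨hd, ht⟩ := List.forall_mem_cons.mp hl
    have hmaps := mapsTo_hWord ht Icc_subset_branchDomain le_rfl
    have hxU := Icc_subset_branchDomain hx
    have hgx : hWord t x ∈ Icc (0 : ℝ) 1 := mapsTo_hWord ht le_rfl Icc_subset_branchDomain hx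
    change |deriv (deriv (h d ∘ hWord t)) x| ≤
      4 * (1 - |deriv (h d ∘ hWord t) x|) * |deriv (h d ∘ hWord t) x|
    rw [deriv_deriv_comp_of_contDiffOn isOpen_branchDomain isOpen_branchDomain hd.contDiffOn_h
        (contDiffOn_hWord ht) hmaps hxU,
      deriv_comp_of_differentiableOn isOpen_branchDomain isOpen_branchDomain
        (hd.contDiffOn_h.differentiableOn two_ne_zero)
        ((contDiffOn_hWord ht).differentiableOn two_ne_zero) hmaps hxU]
    exact abs_mul_sq_add_mul_le (by norm_num) (by norm_num) (hd.abs_deriv_h_le hgx)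
      (hd.abs_deriv_deriv_h_le hgx) (ih ht hx)

end Word

/-- bounded distortion for composed inverse branches:
`|h_{A^{(n)}}''| ≤ C |h_{A^{(n)}}'|` on `[0,1]`, uniformly in the word. -/
theorem bounded_distortion :
    ∃ C : ℝ, 0 < C ∧ ∀ l : List Digit, l ≠ [] → (∀ d ∈ l, d.Valid) →
      ∀ x ∈ Set.Icc (0 : ℝ) 1,
        |deriv (deriv (hWord l)) x| ≤ C * |deriv (hWord l) x| := by
  refine ⟨4, by norm_num, fun l _ hl x hx => ?_⟩
  calc |deriv (deriv (hWord l)) x|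
      ≤ 4 * (1 - |deriv (hWord l) x|) * |deriv (hWord l) x| := abs_deriv_deriv_hWord_le hl hx
    _ ≤ 4 * |deriv (hWord l) x| := by nlinarith [abs_nonneg (deriv (hWord l) x)]

end SCF
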